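/- For any positive semidefinite operator ρ and its associated pinching map P_ρ, the pinching inequality holds: P_ρ(ω) ≥ ω / |Spec(ρ)| for every positive semidefinite ω, where |Spec(ρ)| is the number of distinct eigenvalues of ρ and ≥ denotes the Loewner order. -/

import Mathlib

open scoped Kronecker ComplexOrder
open Matrix

noncomputable section
namespace GEAT

variable {n : Type*} [Fintype n] [DecidableEq n]

/-- Partial trace over the second tensor factor. -/
def ptr2 {A R : Type*} [Fintype R] (M : Matrix (A × R) (A × R) ℂ) : Matrix A A ℂ :=
  fun a a' => ∑ r, M (a, r) (a', r)

/-- Partial trace over the first tensor factor. -/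
def ptr1 {A R : Type*} [Fintype A] (M : Matrix (A × R) (A × R) ℂ) : Matrix R R ℂ :=
  fun r r' => ∑ a, M (a, r) (a, r')

/-- The tensor extension `Φ ⊗ id_C` of a linear map on matrices. -/
def lext {A B : Type*} [Fintype A] [DecidableEq A] [Fintype B] [DecidableEq B]
    (Φ : Matrix A A ℂ →ₗ[ℂ] Matrix B B ℂ) (C : Type*) [Fintype C] [DecidableEq C] :
    Matrix (A × C) (A × C) ℂ →ₗ[ℂ] Matrix (B × C) (B × C) ℂ where
  toFun M := fun p q => Φ (fun a a' => M (a, p.2) (a', q.2)) p.1 q.1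
  map_add' M N := by
    funext p q
    have h : (fun a a' => (M + N) (a, p.2) (a', q.2))
        = (fun a a' => M (a, p.2) (a', q.2)) + (fun a a' => N (a, p.2) (a', q.2)) := rfl
    show Φ _ p.1 q.1 = _
    rw [h]
    exact congrFun (congrFun (map_add Φ _ _) p.1) q.1
  map_smul' c M := by
    funext p q
    have h : (fun a a' => (c • M) (a, p.2) (a', q.2))
        = c • (fun a a' => M (a, p.2) (a', q.2)) := rfl
    show Φ _ p.1 q.1 = _
    rw [h]
    exact congrFun (congrFun (_root_.map_smul Φ _ _) p.1) q.1

/-- Complete positivity of a linear map on matrices. -/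
def IsCPMap {A B : Type*} [Fintype A] [DecidableEq A] [Fintype B] [DecidableEq B]
    (Φ : Matrix A A ℂ →ₗ[ℂ] Matrix B B ℂ) : Prop :=
  ∀ (k : ℕ) (M : Matrix (A × Fin k) (A × Fin k) ℂ), M.PosSemidef → ((lext Φ (Fin k)) M).PosSemidef

/-- Trace preservation. -/
def IsTPMap {A B : Type*} [Fintype A] [DecidableEq A] [Fintype B] [DecidableEq B]
    (Φ : Matrix A A ℂ →ₗ[ℂ] Matrix B B ℂ) : Prop :=
  ∀ M, (Φ M).trace = M.trace

/-- Quantum channel: completely positive and trace preserving. -/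
def IsCPTPMap {A B : Type*} [Fintype A] [DecidableEq A] [Fintype B] [DecidableEq B]
    (Φ : Matrix A A ℂ →ₗ[ℂ] Matrix B B ℂ) : Prop :=
  IsCPMap Φ ∧ IsTPMap Φ

/-- A density matrix. -/
def IsState {A : Type*} [Fintype A] (ρ : Matrix A A ℂ) : Prop :=
  ρ.PosSemidef ∧ ρ.trace = 1

/-- Real matrix power, via the continuous functional calculus. -/
def mrpow (M : Matrix n n ℂ) (p : ℝ) : Matrix n n ℂ :=
  cfc (fun x : ℝ => x ^ p) M

/-- Sandwiched Rényi divergence of order α (base-2 logarithm). -/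
def sandwichedRenyi (α : ℝ) (ρ σ : Matrix n n ℂ) : ℝ :=
  (α - 1)⁻¹ * Real.logb 2
    ((mrpow (mrpow σ ((1 - α) / (2 * α)) * ρ * mrpow σ ((1 - α) / (2 * α))) α).trace.re)

/-- Conditional Rényi entropy `H_α↓(A|B) = −D_α(ρ_AB ‖ 1_A ⊗ ρ_B)`. -/
def condH (α : ℝ) {A B : Type*} [Fintype A] [DecidableEq A] [Fintype B]
    [DecidableEq B] (ρ : Matrix (A × B) (A × B) ℂ) : ℝ :=
  - sandwichedRenyi α ρ ((1 : Matrix A A ℂ) ⊗ₖ ptr1 ρ)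

/-- Conditional Rényi entropy `H_α↑(A|B) = sup_σ −D_α(ρ_AB ‖ 1_A ⊗ σ_B)`. -/
def condHup (α : ℝ) {A B : Type*} [Fintype A] [DecidableEq A] [Fintype B]
    [DecidableEq B] (ρ : Matrix (A × B) (A × B) ℂ) : ℝ :=
  ⨆ σ : {σ : Matrix B B ℂ // IsState σ},
    - sandwichedRenyi α ρ ((1 : Matrix A A ℂ) ⊗ₖ (σ : Matrix B B ℂ))

/-- Von Neumann entropy (base 2). -/
def vnEntropy (ρ : Matrix n n ℂ) : ℝ :=
  - ((cfc (fun x : ℝ => x * Real.logb 2 x) ρ).trace.re)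

/-- Conditional von Neumann entropy `H(A|B) = H(AB) − H(B)`. -/
def condVN {A B : Type*} [Fintype A] [DecidableEq A] [Fintype B] [DecidableEq B]
    (ρ : Matrix (A × B) (A × B) ℂ) : ℝ :=
  vnEntropy ρ - vnEntropy (ptr1 ρ)

/-- Max-relative entropy `D_max(ρ‖σ) = log min {λ ≥ 0 : ρ ≤ λσ}`. -/
def Dmax (ρ σ : Matrix n n ℂ) : ℝ :=
  Real.logb 2 (sInf {l : ℝ | 0 ≤ l ∧ (l • σ - ρ).PosSemidef})

/-- Fidelity `F(ρ,σ) = Tr √(√σ ρ √σ)`. -/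
def fidelity (ρ σ : Matrix n n ℂ) : ℝ :=
  ((mrpow (mrpow σ (1/2 : ℝ) * ρ * mrpow σ (1/2 : ℝ)) (1/2 : ℝ)).trace).re

/-- Purified distance. -/
def purifiedDist (ρ σ : Matrix n n ℂ) : ℝ :=
  Real.sqrt (1 - (fidelity ρ σ) ^ 2)

/-- Trace norm. -/
def trNorm {m : Type*} [Fintype m] [DecidableEq m] {k : Type*} [Fintype k]
    (M : Matrix k m ℂ) : ℝ :=
  ((mrpow (Mᴴ * M) (1/2 : ℝ)).trace).re

/-- Smoothed conditional min-entropy (smoothing in purified distance). -/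
def smoothHmin (ε : ℝ) {A B : Type*} [Fintype A] [DecidableEq A] [Fintype B]
    [DecidableEq B] (ρ : Matrix (A × B) (A × B) ℂ) : ℝ :=
  sSup {h : ℝ | ∃ τ : Matrix (A × B) (A × B) ℂ, τ.PosSemidef ∧ τ.trace.re ≤ 1 ∧
    purifiedDist ρ τ ≤ ε ∧ ∃ σ : Matrix B B ℂ, IsState σ ∧
      h = - Dmax τ ((1 : Matrix A A ℂ) ⊗ₖ σ)}

/-- Smoothed conditional max-entropy (smoothing in purified distance). -/
def smoothHmax (ε : ℝ) {A B : Type*} [Fintype A] [DecidableEq A] [Fintype B]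
    [DecidableEq B] (ρ : Matrix (A × B) (A × B) ℂ) : ℝ :=
  Real.logb 2 (sInf {v : ℝ | ∃ τ : Matrix (A × B) (A × B) ℂ, τ.PosSemidef ∧ τ.trace.re ≤ 1 ∧
    purifiedDist ρ τ ≤ ε ∧
    v = ⨆ σ : {σ : Matrix B B ℂ // IsState σ},
      (trNorm (mrpow τ (1/2 : ℝ) * mrpow ((1 : Matrix A A ℂ) ⊗ₖ (σ : Matrix B B ℂ)) (1/2 : ℝ))) ^ 2})

/-- n-fold tensor power of a matrix. -/
def tpow {A : Type*} [Fintype A] (ρ : Matrix A A ℂ) (m : ℕ) :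
    Matrix (Fin m → A) (Fin m → A) ℂ :=
  fun x y => ∏ i, ρ (x i) (y i)

/-- n-fold tensor power of a linear map on matrices. -/
def npow {A B : Type*} [Fintype A] [DecidableEq A] [Fintype B] [DecidableEq B]
    (Φ : Matrix A A ℂ →ₗ[ℂ] Matrix B B ℂ) (m : ℕ) :
    Matrix (Fin m → A) (Fin m → A) ℂ →ₗ[ℂ] Matrix (Fin m → B) (Fin m → B) ℂ where
  toFun M := fun x y => ∑ a : Fin m → A, ∑ a' : Fin m → A,
    M a a' * ∏ i, Φ (Matrix.single (a i) (a' i) 1) (x i) (y i)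
  map_add' M N := by
    funext x y
    show ∑ a : Fin m → A, ∑ a' : Fin m → A, _ = _
    simp [Matrix.add_apply, add_mul, Finset.sum_add_distrib]
    rfl
  map_smul' c M := by
    funext x y
    show ∑ a : Fin m → A, ∑ a' : Fin m → A, _ = _
    simp [Matrix.smul_apply, smul_eq_mul, Finset.mul_sum, mul_assoc]
    show _ = c * _
    simp [Finset.mul_sum]

/-- Stabilised channel divergence of order α. -/
def channelDiv (α : ℝ) {A B : Type*} [Fintype A] [DecidableEq A] [Fintype B]
    [DecidableEq B] (Φ Ψ : Matrix A A ℂ →ₗ[ℂ] Matrix B B ℂ) : ℝ :=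
  ⨆ ω : {ω : Matrix (A × A) (A × A) ℂ // IsState ω},
    sandwichedRenyi α (lext Φ A (ω : Matrix (A × A) (A × A) ℂ))
      (lext Ψ A (ω : Matrix (A × A) (A × A) ℂ))

/-- Regularised channel divergence `sup_n (1/n) D_α(Φ^{⊗n} ‖ Ψ^{⊗n})`. -/
def channelDivReg (α : ℝ) {A B : Type*} [Fintype A] [DecidableEq A] [Fintype B]
    [DecidableEq B] (Φ Ψ : Matrix A A ℂ →ₗ[ℂ] Matrix B B ℂ) : ℝ :=
  ⨆ m : ℕ, ((m : ℝ) + 1)⁻¹ * channelDiv α (npow Φ (m + 1)) (npow Ψ (m + 1))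

open scoped Classical in
/-- Spectral projector of a Hermitian matrix onto the eigenspace of `t`. -/
def specProj {M : Matrix n n ℂ} (hM : M.IsHermitian) (t : ℝ) : Matrix n n ℂ :=
  ∑ i : n, if hM.eigenvalues i = t then
    (hM.eigenvectorUnitary : Matrix n n ℂ) * Matrix.single i i 1 *
      star (hM.eigenvectorUnitary : Matrix n n ℂ)
  else 0

open scoped Classical in
/-- The spectral pinching map `P_M(ω) = Σ_λ P_λ ω P_λ` (zero if `M` is not Hermitian). -/
def pinching (M ω : Matrix n n ℂ) : Matrix n n ℂ :=
  if hM : M.IsHermitian then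
    ∑ t ∈ Finset.univ.image hM.eigenvalues, specProj hM t * ω * specProj hM t
  else 0

/-!
Only two properties of the spectral projectors `P_t` matter: they are Hermitian and they sum
to `1`. For any such family of `N` matrices, expanding with `∑ P_s = 1` gives
`∑_{s,t} (P_s - P_t) ω (P_s - P_t) = 2 (N ∑_t P_t ω P_t - ω)`,
and every summand on the left is a congruence of `ω`, hence positive semidefinite.
-/

theorem _root_.Finset.sum_sum_sub_mul_mul_sub_of_sum_eq_one {R ι : Type*} [Ring R]
    (s : Finset ι) {P : ι → R} (hP : ∑ i ∈ s, P i = 1) (x : R) :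
    ∑ i ∈ s, ∑ j ∈ s, (P i - P j) * x * (P i - P j)
      = 2 • (s.card • ∑ i ∈ s, P i * x * P i - x) := by
  have hleft : ∑ i ∈ s, P i * x = x := by rw [← Finset.sum_mul, hP, one_mul]
  have hright : ∑ j ∈ s, x * P j = x := by rw [← Finset.mul_sum, hP, mul_one]
  simp only [sub_mul, mul_sub, Finset.sum_sub_distrib, Finset.sum_const, ← Finset.mul_sum,
    ← Finset.sum_mul, hP, mul_one, hleft, hright, ← Finset.smul_sum]
  abel

section ResolutionOfIdentity

variable {𝕜 ι n : Type*} [RCLike 𝕜] [Fintype n] [DecidableEq n]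

theorem posSemidef_card_smul_sum_mul_mul_sub (s : Finset ι) {P : ι → Matrix n n 𝕜}
    (hherm : ∀ i ∈ s, (P i).IsHermitian) (hsum : ∑ i ∈ s, P i = 1)
    {ω : Matrix n n 𝕜} (hω : ω.PosSemidef) :
    ((s.card : 𝕜) • ∑ i ∈ s, P i * ω * P i - ω).PosSemidef := by
  have hterms : (∑ i ∈ s, ∑ j ∈ s, (P i - P j) * ω * (P i - P j)).PosSemidef := by
    refine posSemidef_sum s fun i hi => posSemidef_sum s fun j hj => ?_
    have hdiff : (P i - P j)ᴴ = P i - P j := ((hherm i hi).sub (hherm j hj)).eq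
    simpa only [hdiff] using hω.conjTranspose_mul_mul_same (P i - P j)
  rw [Finset.sum_sum_sub_mul_mul_sub_of_sum_eq_one s hsum, ← Nat.cast_smul_eq_nsmul 𝕜,
    ← Nat.cast_smul_eq_nsmul 𝕜] at hterms
  simpa [smul_smul] using hterms.smul (a := (2 : 𝕜)⁻¹) (by positivity)

theorem posSemidef_sum_mul_mul_sub_inv_card_smul (s : Finset ι) {P : ι → Matrix n n 𝕜}
    (hherm : ∀ i ∈ s, (P i).IsHermitian) (hsum : ∑ i ∈ s, P i = 1)
    {ω : Matrix n n 𝕜} (hω : ω.PosSemidef) :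
    (∑ i ∈ s, P i * ω * P i - (s.card : 𝕜)⁻¹ • ω).PosSemidef := by
  rcases s.eq_empty_or_nonempty with rfl | hs
  · have hω0 : ω = 0 := by simpa using (congrArg (· * ω) hsum).symm
    simpa [hω0] using PosSemidef.zero
  have hscaled := (posSemidef_card_smul_sum_mul_mul_sub s hherm hsum hω).smul
    (a := (s.card : 𝕜)⁻¹) (by positivity)
  have hcard : (s.card : 𝕜) ≠ 0 := Nat.cast_ne_zero.mpr hs.card_pos.ne'
  rwa [smul_sub, smul_smul, inv_mul_cancel₀ hcard, one_smul] at hscaled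

end ResolutionOfIdentity

section SpectralProjectors

variable {A : Type*} [Fintype A] [DecidableEq A] {M : Matrix A A ℂ}

theorem specProj_eq_mul_diagonal_mul_star (hM : M.IsHermitian) (t : ℝ) :
    specProj hM t = (hM.eigenvectorUnitary : Matrix A A ℂ) *
      diagonal (fun i => if hM.eigenvalues i = t then 1 else 0) *
      star (hM.eigenvectorUnitary : Matrix A A ℂ) := by
  rw [specProj, ← sum_single_eq_diagonal, Finset.mul_sum, Finset.sum_mul]
  refine Finset.sum_congr rfl fun i _ => ?_
  split_ifs <;> simp_all

theorem isHermitian_specProj (hM : M.IsHermitian) (t : ℝ) : (specProj hM t).IsHermitian := by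
  rw [specProj_eq_mul_diagonal_mul_star]
  refine isHermitian_mul_mul_conjTranspose _ (isHermitian_diagonal_of_self_adjoint _ ?_)
  ext i
  by_cases h : hM.eigenvalues i = t <;> simp [h]

theorem sum_specProj (hM : M.IsHermitian) :
    ∑ t ∈ Finset.univ.image hM.eigenvalues, specProj hM t = 1 := by
  have hdiag : ∑ t ∈ Finset.univ.image hM.eigenvalues,
      diagonal (fun i => if hM.eigenvalues i = t then (1 : ℂ) else 0) = 1 := by
    ext i j
    rcases eq_or_ne i j with rfl | hij
    · simp [Matrix.sum_apply]
    · simp [Matrix.sum_apply, hij]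
  simp only [specProj_eq_mul_diagonal_mul_star, ← Finset.mul_sum, ← Finset.sum_mul, hdiag,
    mul_one]
  exact Unitary.mul_star_self_of_mem hM.eigenvectorUnitary.2

theorem pinching_of_isHermitian (hM : M.IsHermitian) (ω : Matrix A A ℂ) :
    pinching M ω =
      ∑ t ∈ Finset.univ.image hM.eigenvalues, specProj hM t * ω * specProj hM t := by
  rw [pinching, dif_pos hM]

theorem ncard_spectrum_eq_card_image_eigenvalues (hM : M.IsHermitian) :
    (spectrum ℂ M).ncard = (Finset.univ.image hM.eigenvalues).card := by
  rw [hM.spectrum_eq_image_range, Set.ncard_image_of_injective _ RCLike.ofReal_injective,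
    ← Set.image_univ, ← Finset.coe_univ, ← Finset.coe_image, Set.ncard_coe_finset]

end SpectralProjectors

/-- Pinching inequality: `P_ρ(ω) ≥ ω / |Spec(ρ)|` in the Loewner order. -/
theorem pinching_inequality {A : Type*} [Fintype A] [DecidableEq A]
    (ρ ω : Matrix A A ℂ) (hρ : ρ.PosSemidef) (hω : ω.PosSemidef) :
    (pinching ρ ω - (((spectrum ℂ ρ).ncard : ℂ))⁻¹ • ω).PosSemidef := by
  have hρH : ρ.IsHermitian := hρ.isHermitian
  rw [pinching_of_isHermitian hρH, ncard_spectrum_eq_card_image_eigenvalues hρH]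
  exact posSemidef_sum_mul_mul_sub_inv_card_smul _ (fun t _ => isHermitian_specProj hρH t)
    (sum_specProj hρH) hω

end GEAT
end
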